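/- arXiv:2506.22330 — 12 statements merged into one kernel-verified Lean document; each statement's English description precedes it below -/
import Mathlib

section
/- For any polynomial p with real coefficients and σ ∈ ℝ, the identity p'(z)·F[p_σ](z) = p'_σ(z)·F'[p](z) + (σ·p'_σ(z) − p''_σ(z))·F[p](z) holds. -/
open Polynomial

/-- `F[q] = q·q'' − (q')²`. -/
noncomputable def Fop (q : Polynomial ℝ) : Polynomial ℝ :=
  q * derivative (derivative q) - (derivative q) ^ 2

/-- The Laguerre (generalised) derivative `p_σ = p' + σ·p`. -/
noncomputable def psig (σ : ℝ) (p : Polynomial ℝ) : Polynomial ℝ :=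
  derivative p + C σ * p

theorem stmt2 (p : Polynomial ℝ) (σ : ℝ) :
    derivative p * Fop (psig σ p) =
      derivative (psig σ p) * derivative (Fop p) +
        (C σ * derivative (psig σ p) - derivative (derivative (psig σ p))) * Fop p := by
  simp only [Fop, psig, derivative_add, derivative_mul, derivative_sub, derivative_pow,
    derivative_C, map_ofNat, zero_mul, add_zero, zero_add, Nat.cast_ofNat]
  ring
end

section
/- Let p be a real polynomial, σ ∈ ℝ, and λ ∈ ℂ with p(λ) ≠ 0, p'(λ) ≠ 0, p_σ(λ) ≠ 0, and F[p](λ) = 0. Then p''(λ) ≠ 0 and p'_σ(λ) ≠ 0. -/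
open Polynomial

theorem stmt3 (p : Polynomial ℝ) (σ : ℝ) (lam : ℂ)
    (hp : aeval lam p ≠ 0) (hp' : aeval lam (derivative p) ≠ 0)
    (hps : aeval lam (psig σ p) ≠ 0) (hF : aeval lam (Fop p) = 0) :
    aeval lam (derivative (derivative p)) ≠ 0 ∧
      aeval lam (derivative (psig σ p)) ≠ 0 := by
  simp only [Fop, psig, map_sub, map_add, map_mul, map_pow, aeval_C] at *
  set a := aeval lam p
  set b := aeval lam (derivative p)
  set c := aeval lam (derivative (derivative p))
  have hF' : a * c = b ^ 2 := by linear_combination hF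
  have hc : c ≠ 0 := by
    intro h
    rw [h, mul_zero] at hF'
    exact pow_ne_zero 2 hp' hF'.symm
  refine ⟨hc, ?_⟩
  simp only [derivative_add, derivative_C_mul, map_add, map_mul, aeval_C]
  intro h
  have : b * (b + (algebraMap ℝ ℂ) σ * a) = 0 := by linear_combination a * h - hF'
  exact mul_ne_zero hp' hps this
end

section
/- Let p be a real polynomial, σ ∈ ℝ, and suppose λ ∈ ℂ is a root of F[p_σ] of multiplicity exactly r ≥ 1, with p(λ) ≠ 0, p'(λ) ≠ 0, p_σ(λ) ≠ 0, and F[p](λ) = 0. Then λ is a root of F[p] of multiplicity exactly r + 1. -/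
open Polynomial

/-- `lam` is a root of `f` of multiplicity exactly `r`:
`f` and its first `r−1` derivatives vanish at `lam`, and its `r`-th derivative does not. -/
def RootMultExact (f : Polynomial ℝ) (lam : ℂ) (r : ℕ) : Prop :=
  (∀ j < r, aeval lam (derivative^[j] f) = 0) ∧ aeval lam (derivative^[r] f) ≠ 0

/-- complex version of `Fop`. -/
noncomputable def FopC (q : Polynomial ℂ) : Polynomial ℂ :=
  q * derivative (derivative q) - (derivative q) ^ 2

lemma Fop_map (f : Polynomial ℝ) :
    (Fop f).map (algebraMap ℝ ℂ) = FopC (f.map (algebraMap ℝ ℂ)) := by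
  simp [Fop, FopC, Polynomial.map_mul, Polynomial.map_sub, Polynomial.map_pow,
    derivative_map]

lemma rootMult_eq_iff (f : Polynomial ℂ) (hf : f ≠ 0) (t : ℂ) (r : ℕ) :
    rootMultiplicity t f = r ↔
      (∀ j < r, (derivative^[j] f).eval t = 0) ∧ (derivative^[r] f).eval t ≠ 0 := by
  have key : ∀ n : ℕ, n < rootMultiplicity t f ↔
      ∀ m ≤ n, ((derivative^[m] f).IsRoot t) := fun n =>
    lt_rootMultiplicity_iff_isRoot_iterate_derivative_of_mem_nonZeroDivisors hf
      (mem_nonZeroDivisors_of_ne_zero (by exact_mod_cast Nat.factorial_ne_zero n))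
  constructor
  · rintro rfl
    refine ⟨fun j hj => ?_, fun h => ?_⟩
    · exact isRoot_iterate_derivative_of_lt_rootMultiplicity hj
    · have := (key (rootMultiplicity t f)).mpr ?_
      · omega
      · intro k hk
        rcases lt_or_eq_of_le hk with hk | hk
        · exact isRoot_iterate_derivative_of_lt_rootMultiplicity hk
        · subst hk; exact h
  · rintro ⟨h1, h2⟩
    have hle : rootMultiplicity t f ≤ r := by
      by_contra hlt
      exact h2 (isRoot_iterate_derivative_of_lt_rootMultiplicity (by omega))
    have hge : r ≤ rootMultiplicity t f := by
      rcases Nat.eq_zero_or_pos r with rfl | hr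
      · exact Nat.zero_le _
      · have : r - 1 < rootMultiplicity t f :=
          (key (r - 1)).mpr fun k hk => h1 k (by omega)
        omega
    omega

lemma rootMultExact_iff (f : Polynomial ℝ) (hf : f ≠ 0) (t : ℂ) (r : ℕ) :
    RootMultExact f t r ↔ rootMultiplicity t (f.map (algebraMap ℝ ℂ)) = r := by
  have hf' : f.map (algebraMap ℝ ℂ) ≠ 0 :=
    (Polynomial.map_ne_zero_iff (algebraMap ℝ ℂ).injective).mpr hf
  rw [rootMult_eq_iff _ hf' t r]
  have heval : ∀ j : ℕ, (derivative^[j] (f.map (algebraMap ℝ ℂ))).eval t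
      = aeval t (derivative^[j] f) := by
    intro j
    rw [iterate_derivative_map, aeval_def, eval₂_eq_eval_map]
  unfold RootMultExact
  simp only [heval]

/-- The key polynomial identity. -/
lemma key_identity (P : Polynomial ℂ) (σ : ℂ) :
    FopC (derivative P + C σ * P) * P ^ 2 =
      FopC P * ((derivative P + C σ * P) ^ 2
          - 2 * derivative P * (derivative P + C σ * P) - FopC P)
        + P * (derivative P + C σ * P) * derivative (FopC P) := by
  simp only [FopC, derivative_add, derivative_sub, derivative_mul, derivative_pow,
    derivative_C, zero_mul, add_zero, zero_add, mul_zero, Nat.cast_ofNat, map_ofNat]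
  ring

theorem stmt4 (p : Polynomial ℝ) (σ : ℝ) (lam : ℂ) (r : ℕ) (hr : 1 ≤ r)
    (hmult : RootMultExact (Fop (psig σ p)) lam r)
    (hp : aeval lam p ≠ 0) (hp' : aeval lam (derivative p) ≠ 0)
    (hps : aeval lam (psig σ p) ≠ 0) (hF : aeval lam (Fop p) = 0) :
    RootMultExact (Fop p) lam (r + 1) := by
  set φ := algebraMap ℝ ℂ with hφ
  have hevalP : ∀ f : Polynomial ℝ, (f.map φ).eval lam = aeval lam f := by
    intro f; rw [aeval_def, eval₂_eq_eval_map]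
  set P : Polynomial ℂ := p.map φ with hP
  have hQmap : (psig σ p).map φ = derivative P + C (φ σ) * P := by
    simp [psig, hP, Polynomial.map_add, Polynomial.map_mul, derivative_map, map_C]
  set Q : Polynomial ℂ := derivative P + C (φ σ) * P with hQ
  set F : Polynomial ℂ := FopC P with hFdef
  set G : Polynomial ℂ := FopC Q with hGdef
  -- eval facts
  have hPe : P.eval lam ≠ 0 := by rw [hP, hevalP]; exact hp
  have hQe : Q.eval lam ≠ 0 := by rw [← hQmap, hevalP]; exact hps
  have hFmap : (Fop p).map φ = F := Fop_map p
  have hFe : F.eval lam = 0 := by rw [← hFmap, hevalP]; exact hF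
  -- nonvanishing of polynomials
  have hFq_ne : Fop (psig σ p) ≠ 0 := by
    intro h
    apply hmult.2
    rw [h]
    simp [iterate_derivative_zero]
  have hGmap : (Fop (psig σ p)).map φ = G := by
    rw [Fop_map, ← hφ, hQmap]
  have hG_ne : G ≠ 0 := by
    rw [← hGmap]
    exact (Polynomial.map_ne_zero_iff φ.injective).mpr hFq_ne
  have hGr : rootMultiplicity lam G = r := by
    rw [← hGmap]
    exact (rootMultExact_iff _ hFq_ne lam r).mp hmult
  have hP_ne : P ≠ 0 := fun h => hPe (by rw [h]; simp)
  have hQ_ne : Q ≠ 0 := fun h => hQe (by rw [h]; simp)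
  -- the key identity
  have hid : G * P ^ 2 = F * (Q ^ 2 - 2 * derivative P * Q - F) + P * Q * derivative F := by
    rw [hGdef, hFdef, hQ]; exact key_identity P (φ σ)
  have hF_ne : F ≠ 0 := by
    intro h
    rw [h] at hid
    simp only [zero_mul, mul_zero, sub_zero, add_zero, zero_add, derivative_zero] at hid
    rcases mul_eq_zero.mp hid with h' | h'
    · exact hG_ne h'
    · exact hP_ne (pow_eq_zero_iff (two_ne_zero) |>.mp h')
  set m : ℕ := rootMultiplicity lam F with hm
  have hm1 : 1 ≤ m := (rootMultiplicity_pos hF_ne).mpr hFe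
  have hdF_ne : derivative F ≠ 0 := by
    intro h
    have hc := eq_C_of_derivative_eq_zero h
    rw [hc] at hFe hF_ne
    simp only [eval_C] at hFe
    rw [hFe] at hF_ne
    simp at hF_ne
  have hdFm : rootMultiplicity lam (derivative F) = m - 1 :=
    derivative_rootMultiplicity_of_root hFe
  -- multiplicities of the two product terms
  have hP2e : ¬ IsRoot (P ^ 2) lam := by
    simp only [IsRoot, eval_pow]
    exact pow_ne_zero 2 hPe
  have hGP2 : rootMultiplicity lam (G * P ^ 2) = r := by
    rw [rootMultiplicity_mul (mul_ne_zero hG_ne (pow_ne_zero 2 hP_ne)), hGr,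
      rootMultiplicity_eq_zero hP2e]
    omega
  have hPQdF_ne : P * Q * derivative F ≠ 0 :=
    mul_ne_zero (mul_ne_zero hP_ne hQ_ne) hdF_ne
  have hPQdF : rootMultiplicity lam (P * Q * derivative F) = m - 1 := by
    rw [rootMultiplicity_mul hPQdF_ne, rootMultiplicity_mul (mul_ne_zero hP_ne hQ_ne),
      rootMultiplicity_eq_zero hPe, rootMultiplicity_eq_zero hQe, hdFm]
    omega
  -- expression of P*Q*F' from the identity
  have hid' : P * Q * derivative F = G * P ^ 2 - F * (Q ^ 2 - 2 * derivative P * Q - F) := by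
    rw [hid]; ring
  -- step 1 : m - 1 ≤ r
  have hdvdF : (X - C lam) ^ m ∣ F := by
    rw [hm]; exact pow_rootMultiplicity_dvd F lam
  have hdvddF : (X - C lam) ^ (m - 1) ∣ derivative F := by
    have := pow_rootMultiplicity_dvd (derivative F) lam
    rwa [hdFm] at this
  have h1 : m - 1 ≤ r := by
    rw [← hGP2]
    refine (le_rootMultiplicity_iff (mul_ne_zero hG_ne (pow_ne_zero 2 hP_ne))).mpr ?_
    rw [hid]
    exact dvd_add
      (Dvd.dvd.mul_right ((pow_dvd_pow _ (Nat.sub_le m 1)).trans hdvdF) _)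
      (Dvd.dvd.mul_left hdvddF _)
  -- step 2 : r < m
  have h2 : r < m := by
    by_contra h2
    push_neg at h2
    have hdvdG : (X - C lam) ^ m ∣ G := by
      refine (pow_dvd_pow _ h2).trans ?_
      have := pow_rootMultiplicity_dvd G lam
      rwa [hGr] at this
    have hdvd : (X - C lam) ^ m ∣ P * Q * derivative F := by
      rw [hid']
      exact dvd_sub (hdvdG.mul_right _) (hdvdF.mul_right _)
    have := (le_rootMultiplicity_iff hPQdF_ne).mpr hdvd
    rw [hPQdF] at this
    omega
  have hmr : m = r + 1 := by omega
  -- conclude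
  have hFop_ne : Fop p ≠ 0 := by
    intro h
    apply hF_ne
    rw [← hFmap, h, Polynomial.map_zero]
  rw [rootMultExact_iff _ hFop_ne lam (r + 1), hFmap, ← hm, hmr]
end

section
/- Let p be a real polynomial and λ ∈ ℂ a root of F[p] of multiplicity r ≥ 2 with p(λ) ≠ 0 and p'(λ) ≠ 0. Then for any σ ∈ ℝ with p_σ(λ) ≠ 0, λ is a root of F[p_σ] of multiplicity exactly r − 1. -/
open Polynomial

lemma key_id (σ : ℝ) (p : Polynomial ℝ) :
    p * Fop (psig σ p) =
      psig σ p * derivative (Fop p) + (C σ ^ 2 * p - derivative (derivative p)) * Fop p := by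
  simp only [Fop, psig, derivative_add, derivative_mul, derivative_C, derivative_sub,
    derivative_pow, zero_mul, zero_add, Nat.cast_ofNat, map_ofNat]
  ring

lemma exact_iff_mult {f : Polynomial ℂ} {lam : ℂ} {r : ℕ}
    (hroots : ∀ j < r, eval lam (derivative^[j] f) = 0)
    (hne : eval lam (derivative^[r] f) ≠ 0) :
    f ≠ 0 ∧ rootMultiplicity lam f = r := by
  have hf : f ≠ 0 := by
    rintro rfl
    simp at hne
  refine ⟨hf, le_antisymm ?_ ?_⟩
  · by_contra hlt
    push_neg at hlt
    exact hne (isRoot_iterate_derivative_of_lt_rootMultiplicity hlt)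
  · rcases r with _ | n
    · exact Nat.zero_le _
    · rw [Nat.succ_le_iff, lt_rootMultiplicity_iff_isRoot_iterate_derivative hf]
      exact fun m hm => hroots m (Nat.lt_succ_of_le hm)

lemma mult_to_exact {f : Polynomial ℂ} {lam : ℂ} {r : ℕ} (hf : f ≠ 0)
    (hm : rootMultiplicity lam f = r) :
    (∀ j < r, eval lam (derivative^[j] f) = 0) ∧ eval lam (derivative^[r] f) ≠ 0 := by
  constructor
  · intro j hj
    exact isRoot_iterate_derivative_of_lt_rootMultiplicity (hm ▸ hj)
  · intro h0
    have hlt : r < rootMultiplicity lam f := by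
      rw [lt_rootMultiplicity_iff_isRoot_iterate_derivative hf]
      intro m hm'
      rcases eq_or_lt_of_le hm' with rfl | hlt
      · exact h0
      · exact isRoot_iterate_derivative_of_lt_rootMultiplicity (hm ▸ hlt)
    omega

theorem stmt5 (p : Polynomial ℝ) (lam : ℂ) (r : ℕ) (hr : 2 ≤ r)
    (hmult : RootMultExact (Fop p) lam r)
    (hp : aeval lam p ≠ 0) (hp' : aeval lam (derivative p) ≠ 0) :
    ∀ σ : ℝ, aeval lam (psig σ p) ≠ 0 →
      RootMultExact (Fop (psig σ p)) lam (r - 1) := by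
  intro σ hq
  set Φ : Polynomial ℝ → Polynomial ℂ := fun f => f.map (algebraMap ℝ ℂ) with hΦ
  have haev0 : ∀ f : Polynomial ℝ, aeval lam f = eval lam (Φ f) := fun f => by
    rw [aeval_def, eval₂_eq_eval_map]
  have haev : ∀ (f : Polynomial ℝ) (j : ℕ),
      aeval lam (derivative^[j] f) = eval lam (derivative^[j] (Φ f)) := fun f j => by
    rw [haev0, hΦ]
    simp [iterate_derivative_map]
  set q := psig σ p with hqdef
  obtain ⟨hW0, hWm⟩ := exact_iff_mult
    (f := Φ (Fop p)) (lam := lam) (r := r)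
    (fun j hj => by rw [← haev]; exact hmult.1 j hj) (by rw [← haev]; exact hmult.2)
  have hWroot : (Φ (Fop p)).IsRoot lam := by
    have := hmult.1 0 (by omega)
    rw [haev] at this
    exact this
  have hW'm : rootMultiplicity lam (derivative (Φ (Fop p))) = r - 1 := by
    rw [derivative_rootMultiplicity_of_root hWroot, hWm]
  have hW'0 : derivative (Φ (Fop p)) ≠ 0 := by
    intro h
    rw [h, rootMultiplicity_zero] at hW'm
    omega
  have hid : Φ p * Φ (Fop q) =
      Φ q * derivative (Φ (Fop p))
        + Φ (C σ ^ 2 * p - derivative (derivative p)) * Φ (Fop p) := by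
    rw [hΦ]
    simp only [derivative_map, ← Polynomial.map_mul, ← Polynomial.map_add]
    exact congrArg _ (key_id σ p)
  have hprime : Prime (X - C lam : Polynomial ℂ) := prime_X_sub_C lam
  have hdvdW : (X - C lam) ^ r ∣ Φ (Fop p) := by
    rw [← hWm]; exact pow_rootMultiplicity_dvd _ _
  have hdvdW' : (X - C lam) ^ (r - 1) ∣ derivative (Φ (Fop p)) := by
    rw [← hW'm]; exact pow_rootMultiplicity_dvd _ _
  have hd2 : (X - C lam) ^ r ∣ Φ (C σ ^ 2 * p - derivative (derivative p)) * Φ (Fop p) :=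
    dvd_mul_of_dvd_right hdvdW _
  have hd1 : (X - C lam) ^ (r - 1) ∣ Φ p * Φ (Fop q) := by
    rw [hid]
    exact dvd_add (dvd_mul_of_dvd_right hdvdW' _)
      ((pow_dvd_pow _ (Nat.sub_le r 1)).trans hd2)
  have hnp : ¬ (X - C lam) ∣ Φ p := by
    rw [dvd_iff_isRoot]
    exact fun h => hp (by rw [haev0]; exact h)
  have hnq : ¬ (X - C lam) ∣ Φ q := by
    rw [dvd_iff_isRoot]
    exact fun h => hq (by rw [haev0]; exact h)
  have hPdvd : (X - C lam) ^ (r - 1) ∣ Φ (Fop q) :=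
    hprime.pow_dvd_of_dvd_mul_left _ hnp hd1
  have hnot : ¬ (X - C lam) ^ r ∣ Φ p * Φ (Fop q) := by
    intro hcon
    have h3 : (X - C lam) ^ r ∣ Φ q * derivative (Φ (Fop p)) := by
      have h := dvd_sub hcon hd2
      rwa [hid, add_sub_cancel_right] at h
    have h4 : (X - C lam) ^ r ∣ derivative (Φ (Fop p)) :=
      hprime.pow_dvd_of_dvd_mul_left _ hnq h3
    have h5 := (le_rootMultiplicity_iff hW'0).mpr h4
    omega
  have hP0 : Φ (Fop q) ≠ 0 := by
    intro h
    exact hnot (by rw [h, mul_zero]; exact dvd_zero _)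
  have hPm : rootMultiplicity lam (Φ (Fop q)) = r - 1 := by
    have h1 : r - 1 ≤ rootMultiplicity lam (Φ (Fop q)) :=
      (le_rootMultiplicity_iff hP0).mpr hPdvd
    have h2 : ¬ r ≤ rootMultiplicity lam (Φ (Fop q)) := fun h =>
      hnot (dvd_mul_of_dvd_right ((le_rootMultiplicity_iff hP0).mp h) _)
    omega
  obtain ⟨h5, h6⟩ := mult_to_exact hP0 hPm
  exact ⟨fun j hj => by rw [haev]; exact h5 j hj, by rw [haev]; exact h6⟩
end

section
/- Let p be a real polynomial, σ ∈ ℝ with σ ≠ 0, and λ ∈ ℂ with p(λ) ≠ 0. If λ is a root of p_σ = p' + σp of multiplicity exactly r + 1 (r ≥ 1), then p^(j)(λ) ≠ 0 for j = 0, 1, …, r + 1, and p^(j+1)(λ)/p^(j)(λ) = −σ for j = 0, 1, …, r. -/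
open Polynomial

theorem stmt6 (p : Polynomial ℝ) (σ : ℝ) (hσ : σ ≠ 0) (lam : ℂ) (r : ℕ) (hr : 1 ≤ r)
    (hp : aeval lam p ≠ 0)
    (hmult : (∀ j < r + 1, aeval lam (derivative^[j] (psig σ p)) = 0) ∧
      aeval lam (derivative^[r + 1] (psig σ p)) ≠ 0) :
    (∀ j ≤ r + 1, aeval lam (derivative^[j] p) ≠ 0) ∧
      ∀ j ≤ r, aeval lam (derivative^[j + 1] p) / aeval lam (derivative^[j] p)
        = -(σ : ℂ) := by
  have key : ∀ j, derivative^[j] (psig σ p)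
      = derivative^[j + 1] p + C σ * derivative^[j] p := by
    intro j
    induction j with
    | zero => simp [psig]
    | succ n ih =>
      rw [Function.iterate_succ_apply', ih, derivative_add, derivative_C_mul,
        Function.iterate_succ_apply', Function.iterate_succ_apply', Function.iterate_succ_apply']
  have step : ∀ j ≤ r, aeval lam (derivative^[j + 1] p)
      = -(σ : ℂ) * aeval lam (derivative^[j] p) := by
    intro j hj
    have h := hmult.1 j (by omega)
    rw [key] at h
    simp only [map_add, map_mul, aeval_C, Complex.coe_algebraMap] at h
    linear_combination h
  have nz : ∀ j ≤ r + 1, aeval lam (derivative^[j] p) ≠ 0 := by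
    intro j hj
    induction j with
    | zero => simpa using hp
    | succ n ih =>
      rw [step n (by omega)]
      exact mul_ne_zero (neg_ne_zero.mpr (by exact_mod_cast hσ)) (ih (by omega))
  refine ⟨nz, fun j hj => ?_⟩
  rw [step j hj, mul_div_assoc, div_self (nz j (by omega)), mul_one]
end

section
/- Let p be a real polynomial and λ ∈ ℂ with p(λ) ≠ 0, p'(λ) = 0, and suppose λ is a root of F[p] of multiplicity exactly r ≥ 1. Then p^(j)(λ) = 0 for j = 1, …, r + 1 and p^(r+2)(λ) ≠ 0; in particular λ is a root of p' = p_0 of multiplicity exactly r + 1. -/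
open Polynomial

private lemma aeval_iter (q : Polynomial ℝ) (lam : ℂ) (j : ℕ) :
    aeval lam (derivative^[j] q) = (derivative^[j] (q.map (algebraMap ℝ ℂ))).eval lam := by
  rw [iterate_derivative_map, aeval_def, eval_map]

theorem stmt8 (p : Polynomial ℝ) (lam : ℂ) (r : ℕ) (hr : 1 ≤ r)
    (hp : aeval lam p ≠ 0) (hp' : aeval lam (derivative p) = 0)
    (hmult : RootMultExact (Fop p) lam r) :
    ((∀ j, 1 ≤ j → j ≤ r + 1 → aeval lam (derivative^[j] p) = 0) ∧
        aeval lam (derivative^[r + 2] p) ≠ 0) ∧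
      RootMultExact (derivative p) lam (r + 1) := by
  classical
  obtain ⟨hF0, hFr⟩ := hmult
  set P : Polynomial ℂ := p.map (algebraMap ℝ ℂ) with hPdef
  set Q : Polynomial ℂ := derivative P with hQdef
  -- basic translations
  have hPl : P.eval lam ≠ 0 := by
    have h0 := aeval_iter p lam 0
    simp only [Function.iterate_zero, id_eq] at h0
    rwa [h0] at hp
  have hQmap : (derivative p).map (algebraMap ℝ ℂ) = Q := by
    rw [hQdef, hPdef, derivative_map]
  have hQl : Q.eval lam = 0 := by
    have h0 := aeval_iter (derivative p) lam 0
    simp only [Function.iterate_zero, id_eq, hQmap] at h0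
    rwa [h0] at hp'
  have hFP : (Fop p).map (algebraMap ℝ ℂ) = P * derivative Q - Q ^ 2 := by
    unfold Fop
    rw [Polynomial.map_sub, Polynomial.map_mul, Polynomial.map_pow, ← derivative_map, hQmap]
  have hFPne : (Fop p).map (algebraMap ℝ ℂ) ≠ 0 := by
    intro h
    apply hFr
    rw [aeval_iter, h]
    simp
  have hQne : Q ≠ 0 := by
    intro h
    apply hFPne
    rw [hFP, h]
    simp
  set k := Q.rootMultiplicity lam with hkdef
  have h1k : 1 ≤ k := (rootMultiplicity_pos hQne).2 hQl
  obtain ⟨m, hk⟩ : ∃ m, k = m + 1 := ⟨k - 1, (Nat.succ_pred_eq_of_pos h1k).symm⟩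
  obtain ⟨g, hQg, hgd⟩ := Q.exists_eq_pow_rootMultiplicity_mul_and_not_dvd hQne lam
  rw [← hkdef, hk] at hQg
  have hgl : g.eval lam ≠ 0 := fun h => hgd (dvd_iff_isRoot.2 h)
  -- factor F[p] = (X - lam)^m * h with h(lam) ≠ 0
  set h : Polynomial ℂ :=
    P * (C ((m + 1 : ℕ) : ℂ) * g + (X - C lam) * derivative g)
      - (X - C lam) ^ (m + 2) * g ^ 2 with hhdef
  have hdQ : derivative Q = C ((m + 1 : ℕ) : ℂ) * (X - C lam) ^ m * g
      + (X - C lam) ^ (m + 1) * derivative g := by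
    rw [hQg, derivative_mul, derivative_pow, derivative_X_sub_C]
    simp only [Nat.add_sub_cancel]
    ring
  have hFfact : (Fop p).map (algebraMap ℝ ℂ) = (X - C lam) ^ m * h := by
    rw [hFP, hdQ, hQg, hhdef]
    ring
  have hhl : h.eval lam ≠ 0 := by
    have : h.eval lam = P.eval lam * (((m + 1 : ℕ) : ℂ) * g.eval lam) := by
      simp [hhdef]
    rw [this]
    exact mul_ne_zero hPl (mul_ne_zero (Nat.cast_ne_zero.mpr (Nat.succ_ne_zero m)) hgl)
  -- rootMultiplicity of F[p] over ℂ equals m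
  have hFmult : ((Fop p).map (algebraMap ℝ ℂ)).rootMultiplicity lam = m := by
    rw [hFfact, rootMultiplicity_mul (by rw [← hFfact]; exact hFPne),
      rootMultiplicity_X_sub_C_pow, rootMultiplicity_eq_zero hhl, add_zero]
  -- but also equals r
  have hFmult_r : ((Fop p).map (algebraMap ℝ ℂ)).rootMultiplicity lam = r := by
    have hle : r ≤ ((Fop p).map (algebraMap ℝ ℂ)).rootMultiplicity lam := by
      have := lt_rootMultiplicity_of_isRoot_iterate_derivative (t := lam) (n := r - 1) hFPne
        (fun j hj => by
          have := hF0 j (by omega)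
          rwa [aeval_iter] at this)
      omega
    have hge : ((Fop p).map (algebraMap ℝ ℂ)).rootMultiplicity lam ≤ r := by
      by_contra hc
      push_neg at hc
      exact hFr (by rw [aeval_iter]; exact isRoot_iterate_derivative_of_lt_rootMultiplicity hc)
    omega
  have hmr : m = r := by rw [hFmult] at hFmult_r; exact hFmult_r
  have hk' : k = r + 1 := by omega
  -- now k = m + 1 = r + 1 is the exact multiplicity of Q at lam
  have hvanish : ∀ i < k, (derivative^[i] Q).eval lam = 0 := fun i hi =>
    isRoot_iterate_derivative_of_lt_rootMultiplicity (by rw [← hkdef]; exact hi)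
  have hnonzero : (derivative^[k] Q).eval lam ≠ 0 := by
    rw [hkdef, eval_iterate_derivative_rootMultiplicity]
    exact smul_ne_zero (Nat.factorial_ne_zero _)
      (eval_divByMonic_pow_rootMultiplicity_ne_zero lam hQne)
  refine ⟨⟨?_, ?_⟩, ?_, ?_⟩
  · intro j hj1 hj2
    obtain ⟨i, rfl⟩ : ∃ i, j = i + 1 := ⟨j - 1, (Nat.succ_pred_eq_of_pos hj1).symm⟩
    rw [aeval_iter, Function.iterate_succ_apply, ← hQdef]
    exact hvanish i (by omega)
  · rw [aeval_iter, Function.iterate_succ_apply, ← hQdef]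
    have : r + 1 = k := hk'.symm
    rw [this]
    exact hnonzero
  · intro j hj
    rw [aeval_iter, hQmap]
    exact hvanish j (by omega)
  · rw [aeval_iter, hQmap, show r + 1 = k from hk'.symm]
    exact hnonzero
end

section
/- Let p be a real polynomial with all roots simple. Then the set of complex numbers that occur as a multiple root of p_σ = p' + σp for some σ ∈ ℝ has cardinality at most 2·deg(p) − 2. -/
open Polynomial

theorem stmt9 (p : Polynomial ℝ) (hdeg : 1 ≤ p.natDegree)
    (hsimple : ∀ z : ℂ, aeval z p = 0 → aeval z (derivative p) ≠ 0) :
    ({z : ℂ | ∃ σ : ℝ, aeval z (psig σ p) = 0 ∧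
        aeval z (derivative (psig σ p)) = 0}).Finite ∧
      ({z : ℂ | ∃ σ : ℝ, aeval z (psig σ p) = 0 ∧
        aeval z (derivative (psig σ p)) = 0}).ncard ≤ 2 * p.natDegree - 2 := by
  set Q : Polynomial ℝ := derivative p ^ 2 - p * derivative (derivative p) with hQ
  set Qc : Polynomial ℂ := Q.map (algebraMap ℝ ℂ) with hQc
  -- Qc is nonzero
  have hpne : p ≠ 0 := fun h => by simp [h] at hdeg
  have hpc : 0 < (p.map (algebraMap ℝ ℂ)).degree := by
    rw [Polynomial.degree_map]
    exact Polynomial.natDegree_pos_iff_degree_pos.mp (by omega)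
  obtain ⟨z0, hz0⟩ := Complex.exists_root hpc
  have hz0p : aeval z0 p = 0 := by rwa [Polynomial.aeval_def, ← Polynomial.eval_map]
  have hQcne : Qc ≠ 0 := by
    intro h
    have heval : aeval z0 Q = 0 := by
      rw [Polynomial.aeval_def, ← Polynomial.eval_map, ← hQc, h, Polynomial.eval_zero]
    rw [hQ] at heval
    simp only [map_sub, map_mul, map_pow, hz0p, zero_mul, sub_zero] at heval
    exact hsimple z0 hz0p (pow_eq_zero_iff (n := 2) (by norm_num) |>.mp heval)
  -- the set is contained in the roots of Qc
  have hsub : {z : ℂ | ∃ σ : ℝ, aeval z (psig σ p) = 0 ∧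
      aeval z (derivative (psig σ p)) = 0} ⊆ {z : ℂ | Qc.IsRoot z} := by
    intro z hz
    obtain ⟨σ, h1, h2⟩ := hz
    simp only [psig, derivative_add, derivative_mul, derivative_C, zero_mul, zero_add,
      map_add, map_mul, aeval_C] at h1 h2
    show Qc.eval z = 0
    rw [hQc, Polynomial.eval_map, ← Polynomial.aeval_def, hQ]
    simp only [map_sub, map_mul, map_pow]
    set P := aeval z p
    set P' := aeval z (derivative p)
    set P'' := aeval z (derivative (derivative p))
    have hs : (algebraMap ℝ ℂ) σ = (σ : ℂ) := rfl
    rw [hs] at h1 h2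
    linear_combination P' * h1 - P * h2
  have hfin : ({z : ℂ | Qc.IsRoot z}).Finite := Polynomial.finite_setOf_isRoot hQcne
  refine ⟨hfin.subset hsub, ?_⟩
  have hcard : ({z : ℂ | Qc.IsRoot z}).ncard ≤ Qc.natDegree := by
    have : {z : ℂ | Qc.IsRoot z} = ↑Qc.roots.toFinset := by
      ext z
      simp [Polynomial.mem_roots, hQcne]
    rw [this, Set.ncard_coe_finset]
    calc Qc.roots.toFinset.card ≤ Multiset.card Qc.roots := Qc.roots.toFinset_card_le
      _ ≤ Qc.natDegree := Qc.card_roots'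
  have hQdeg : Qc.natDegree ≤ 2 * p.natDegree - 2 := by
    rw [hQc, Polynomial.natDegree_map, hQ]
    refine le_trans (Polynomial.natDegree_sub_le _ _) (max_le ?_ ?_)
    · calc (derivative p ^ 2).natDegree ≤ 2 * (derivative p).natDegree :=
          Polynomial.natDegree_pow_le
        _ ≤ 2 * (p.natDegree - 1) := by
            have := p.natDegree_derivative_le
            omega
        _ ≤ 2 * p.natDegree - 2 := by omega
    · rcases Nat.lt_or_ge p.natDegree 2 with h | h
      · have h0 : (derivative p).natDegree = 0 := by
          have := p.natDegree_derivative_le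
          omega
        obtain ⟨c, hc⟩ := Polynomial.natDegree_eq_zero.mp h0
        rw [← hc, derivative_C, mul_zero, natDegree_zero]
        exact Nat.zero_le _
      · calc (p * derivative (derivative p)).natDegree
            ≤ p.natDegree + (derivative (derivative p)).natDegree :=
              Polynomial.natDegree_mul_le
          _ ≤ 2 * p.natDegree - 2 := by
              have h1 := (derivative p).natDegree_derivative_le
              have h2 := p.natDegree_derivative_le
              omega
  exact le_trans (Set.ncard_le_ncard hsub hfin) (le_trans hcard hQdeg)
end

section
/- Let p be a real polynomial with all roots simple and deg p ≥ 1. Every point λ ∈ ℂ that is a multiple root of p_σ for some σ ∈ ℝ is a root of F[p] = p·p'' − (p')²; in particular, such points form a subset of the roots of a fixed nonzero polynomial of degree 2·deg(p) − 2, independent of σ. -/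
open Polynomial

theorem stmt10 (p : Polynomial ℝ) (hdeg : 1 ≤ p.natDegree)
    (hsimple : ∀ z : ℂ, aeval z p = 0 → aeval z (derivative p) ≠ 0) :
    Fop p ≠ 0 ∧ (Fop p).natDegree = 2 * p.natDegree - 2 ∧
      ∀ z : ℂ, (∃ σ : ℝ, aeval z (psig σ p) = 0 ∧
        aeval z (derivative (psig σ p)) = 0) → aeval z (Fop p) = 0 := by
  set n := p.natDegree with hn
  have hp0 : p ≠ 0 := fun h => absurd hdeg (by rw [hn, h]; simp)
  have ha : p.leadingCoeff ≠ 0 := leadingCoeff_ne_zero.mpr hp0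
  set a := p.leadingCoeff with hA
  have hco1 : (derivative p).coeff (n - 1) = a * n := by
    rw [coeff_derivative, (by omega : n - 1 + 1 = n), hA, leadingCoeff, ← hn,
      Nat.cast_sub hdeg]
    push_cast
    ring
  have hcn : a * (n : ℝ) ≠ 0 :=
    mul_ne_zero ha (Nat.cast_ne_zero.mpr (by omega))
  have hdle : (derivative p).natDegree ≤ n - 1 := natDegree_derivative_le p
  have hd1 : (derivative p).natDegree = n - 1 :=
    natDegree_eq_of_le_of_coeff_ne_zero hdle (hco1 ▸ hcn)
  have hlc1 : (derivative p).leadingCoeff = a * n := by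
    rw [leadingCoeff, hd1, hco1]
  have hder0 : derivative p ≠ 0 := by
    intro h; rw [h, coeff_zero] at hco1; exact hcn hco1.symm
  have key : Fop p ≠ 0 ∧ (Fop p).natDegree = 2 * n - 2 := by
    rcases eq_or_lt_of_le hdeg with h1 | h2
    · -- n = 1
      have hn1 : n = 1 := h1.symm
      have hd0 : (derivative p).natDegree = 0 := by rw [hd1, hn1]
      have hdd : derivative (derivative p) = 0 := by
        rw [eq_C_of_natDegree_eq_zero hd0]; simp
      have hF : Fop p = -((derivative p) ^ 2) := by
        rw [Fop, hdd]; ring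
      have h2' : (derivative p) ^ 2 ≠ 0 := pow_ne_zero _ hder0
      constructor
      · rw [hF]; simpa using h2'
      · rw [hF, hn1, natDegree_neg, natDegree_pow, hd0]
    · -- n ≥ 2
      have hn2 : 2 ≤ n := h2
      have hco2 : (derivative (derivative p)).coeff (n - 2) = a * n * ((n - 1 : ℕ) : ℝ) := by
        rw [coeff_derivative, (by omega : n - 2 + 1 = n - 1), hco1,
          Nat.cast_sub hdeg, Nat.cast_sub hn2]
        push_cast
        ring
      have hcn2 : a * (n : ℝ) * ((n - 1 : ℕ) : ℝ) ≠ 0 :=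
        mul_ne_zero hcn (Nat.cast_ne_zero.mpr (by omega))
      have hdd2le : (derivative (derivative p)).natDegree ≤ n - 2 := by
        calc (derivative (derivative p)).natDegree ≤ (derivative p).natDegree - 1 :=
              natDegree_derivative_le _
          _ ≤ n - 2 := by omega
      have hdd2 : (derivative (derivative p)).natDegree = n - 2 :=
        natDegree_eq_of_le_of_coeff_ne_zero hdd2le (hco2 ▸ hcn2)
      have hlc2 : (derivative (derivative p)).leadingCoeff = a * n * ((n - 1 : ℕ) : ℝ) := by
        rw [leadingCoeff, hdd2, hco2]
      have hc1 : (p * derivative (derivative p)).coeff (2 * n - 2)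
          = a * (a * n * ((n - 1 : ℕ) : ℝ)) := by
        have he : 2 * n - 2 = p.natDegree + (derivative (derivative p)).natDegree := by
          rw [hdd2, ← hn]; omega
        rw [he, coeff_mul_degree_add_degree, ← hA, hlc2]
      have hc2 : ((derivative p) ^ 2).coeff (2 * n - 2) = (a * n) * (a * n) := by
        have he : 2 * n - 2 = (derivative p).natDegree + (derivative p).natDegree := by
          rw [hd1]; omega
        rw [sq, he, coeff_mul_degree_add_degree, hlc1]
      have hcF : (Fop p).coeff (2 * n - 2) = -(a * a * n) := by
        rw [Fop, coeff_sub, hc1, hc2, Nat.cast_sub hdeg]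
        push_cast
        ring
      have hcF0 : (Fop p).coeff (2 * n - 2) ≠ 0 := by
        rw [hcF]
        simp only [neg_ne_zero]
        exact mul_ne_zero (mul_ne_zero ha ha) (Nat.cast_ne_zero.mpr (by omega))
      have hFle : (Fop p).natDegree ≤ 2 * n - 2 := by
        rw [Fop]
        refine (natDegree_sub_le _ _).trans (max_le ?_ ?_)
        · calc (p * derivative (derivative p)).natDegree ≤
              p.natDegree + (derivative (derivative p)).natDegree := natDegree_mul_le
            _ ≤ 2 * n - 2 := by rw [hdd2, ← hn]; omega
        · rw [natDegree_pow, hd1]; omega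
      exact ⟨fun h => hcF0 (by rw [h]; simp),
        natDegree_eq_of_le_of_coeff_ne_zero hFle hcF0⟩
  refine ⟨key.1, key.2, ?_⟩
  rintro z ⟨σ, h1, h2⟩
  simp only [psig, derivative_add, derivative_mul, derivative_C, zero_mul, zero_add,
    map_add, map_mul, aeval_C, Fop, map_sub, map_pow] at h1 h2 ⊢
  set A := aeval z p
  set B := aeval z (derivative p)
  set D := aeval z (derivative (derivative p))
  linear_combination A * h2 - B * h1
end

section
/- For any real polynomial p and any σ ∈ ℝ, the number of non-real complex roots (counted with multiplicity) of p_σ = p' + σp does not exceed the number of non-real complex roots (counted with multiplicity) of p. -/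
open Polynomial
open scoped Classical

/-- The number of non-real complex roots of a real polynomial,
counted with multiplicity. -/
noncomputable def Zc (p : Polynomial ℝ) : ℕ :=
  Multiset.card (((p.map (algebraMap ℝ ℂ)).roots).filter (fun z => z.im ≠ 0))

/-!
Write `r(q)` for the number of real roots of `q`, so that `Zc q + r(q) = deg q`. By Rolle's theorem
applied to `x ↦ exp (σ x) p(x)`, whose derivative is `exp (σ x) p_σ(x)`, the polynomial `p_σ` has a
root strictly between any two consecutive real roots of `p`; moreover a root of `p` of multiplicity
`m` is a root of `p_σ` of multiplicity at least `m - 1`. Hence `r(p) ≤ r(p_σ) + 1`, and as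
`deg p_σ ≤ deg p` we get `Zc p_σ ≤ Zc p + 1`. Both sides are even, since the non-real roots of a
real polynomial come in conjugate pairs.
-/

theorem Multiset.even_card_filter_im_ne_zero_of_map_conj {S : Multiset ℂ}
    (hS : S.map (starRingEnd ℂ) = S) :
    Even (Multiset.card (S.filter (fun z => z.im ≠ 0))) := by
  have hcount (z : ℂ) : S.count (starRingEnd ℂ z) = S.count z := by
    conv_lhs => rw [← hS]
    exact Multiset.count_map_eq_count' _ _ (starRingEnd ℂ).injective z
  have hsplit : S.filter (fun z => z.im ≠ 0)
      = S.filter (fun z => 0 < z.im) + S.filter (fun z => z.im < 0) := by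
    ext z
    simp only [Multiset.count_add, Multiset.count_filter]
    rcases lt_trichotomy z.im 0 with h | h | h
    · simp [h, h.ne, asymm h]
    · simp [h]
    · simp [h, h.ne', asymm h]
  have hconj : (S.filter (fun z => 0 < z.im)).map (starRingEnd ℂ)
      = S.filter (fun z => z.im < 0) := by
    ext z
    rw [← Complex.conj_conj z, Multiset.count_map_eq_count' _ _ (starRingEnd ℂ).injective,
      Multiset.count_filter, Multiset.count_filter, hcount]
    simp [Complex.conj_im]
  rw [hsplit, Multiset.card_add, ← hconj, Multiset.card_map]
  exact Even.add_self _

namespace Polynomial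

theorem roots_map_ofReal_map_conj (p : ℝ[X]) :
    (p.map (algebraMap ℝ ℂ)).roots.map (starRingEnd ℂ) = (p.map (algebraMap ℝ ℂ)).roots := by
  have hconj : (p.map (algebraMap ℝ ℂ)).map (starRingEnd ℂ) = p.map (algebraMap ℝ ℂ) := by
    rw [map_map]
    congr 1
    ext x
    simp [Complex.conj_ofReal]
  rw [← (IsAlgClosed.splits _).roots_map, hconj]

theorem roots_map_ofReal_filter_im_eq_zero (p : ℝ[X]) :
    (p.map (algebraMap ℝ ℂ)).roots.filter (fun z => ¬ z.im ≠ 0)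
      = p.roots.map (algebraMap ℝ ℂ) := by
  have hinj : Function.Injective (algebraMap ℝ ℂ) := (algebraMap ℝ ℂ).injective
  ext z
  rw [Multiset.count_filter]
  by_cases h : z.im = 0
  · obtain ⟨x, rfl⟩ : ∃ x : ℝ, algebraMap ℝ ℂ x = z :=
      ⟨z.re, Complex.ext (by simp) (by simp [h])⟩
    rw [if_pos (by simp), Multiset.count_map_eq_count' _ _ hinj, count_roots,
      count_roots, ← eq_rootMultiplicity_map hinj]
  · rw [if_neg (by simpa using h), eq_comm, Multiset.count_eq_zero]
    intro hmem
    obtain ⟨x, -, rfl⟩ := Multiset.mem_map.mp hmem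
    exact h (by simp)

theorem rootMultiplicity_sub_one_le_derivative_add_C_mul {R : Type*} [CommRing R] [IsDomain R]
    [CharZero R] {p : R[X]} {c : R} (h : derivative p + C c * p ≠ 0) (x : R) :
    p.rootMultiplicity x - 1 ≤ (derivative p + C c * p).rootMultiplicity x := by
  rw [le_rootMultiplicity_iff h]
  refine dvd_add ?_ (dvd_mul_of_dvd_right ?_ _)
  · exact (pow_dvd_pow _ (rootMultiplicity_sub_one_le_derivative_rootMultiplicity p x)).trans
      (pow_rootMultiplicity_dvd _ _)
  · exact (pow_dvd_pow _ (Nat.sub_le _ _)).trans (pow_rootMultiplicity_dvd _ _)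

theorem card_roots_le_card_roots_add_one_of_interleaved {R : Type*} [CommRing R] [IsDomain R]
    [LinearOrder R] {p q : R[X]}
    (hmult : ∀ x, p.rootMultiplicity x - 1 ≤ q.rootMultiplicity x)
    (hbetween : ∀ x ∈ p.roots, ∀ y ∈ p.roots, x < y → ∃ z ∈ q.roots, z ∈ Set.Ioo x y) :
    Multiset.card p.roots ≤ Multiset.card q.roots + 1 := by
  have hdistinct : p.roots.toFinset.card ≤ (q.roots.toFinset \ p.roots.toFinset).card + 1 :=
    Finset.card_le_sdiff_of_interleaved fun x hx y hy hxy _ => by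
      simpa using hbetween x (by simpa using hx) y (by simpa using hy) hxy
  calc
    Multiset.card p.roots = ∑ x ∈ p.roots.toFinset, p.roots.count x :=
      (Multiset.toFinset_sum_count_eq _).symm
    _ = ∑ x ∈ p.roots.toFinset, (p.roots.count x - 1 + 1) :=
      Eq.symm <| Finset.sum_congr rfl fun _ hx => tsub_add_cancel_of_le <|
        Nat.succ_le_iff.2 <| Multiset.count_pos.2 <| Multiset.mem_toFinset.1 hx
    _ = (∑ x ∈ p.roots.toFinset, (p.rootMultiplicity x - 1)) + p.roots.toFinset.card := by
      simp only [Finset.sum_add_distrib, Finset.card_eq_sum_ones, count_roots]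
    _ ≤ (∑ x ∈ p.roots.toFinset, q.rootMultiplicity x) +
          ((q.roots.toFinset \ p.roots.toFinset).card + 1) :=
      add_le_add (Finset.sum_le_sum fun x _ => hmult x) hdistinct
    _ ≤ (∑ x ∈ p.roots.toFinset, q.roots.count x) +
          ((∑ x ∈ q.roots.toFinset \ p.roots.toFinset, q.roots.count x) + 1) := by
      simp only [← count_roots, Finset.card_eq_sum_ones]
      gcongr with x hx
      rw [Nat.succ_le_iff, Multiset.count_pos, ← Multiset.mem_toFinset]
      exact (Finset.mem_sdiff.1 hx).1
    _ = Multiset.card q.roots + 1 := by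
      rw [← add_assoc, ← Finset.sum_union Finset.disjoint_sdiff, Finset.union_sdiff_self_eq_union,
        ← Multiset.toFinset_sum_count_eq, ← Finset.sum_subset Finset.subset_union_right]
      intro x _ hx₂
      simpa only [Multiset.mem_toFinset, Multiset.count_eq_zero] using hx₂

end Polynomial

theorem even_Zc (p : ℝ[X]) : Even (Zc p) :=
  Multiset.even_card_filter_im_ne_zero_of_map_conj (roots_map_ofReal_map_conj p)

theorem Zc_add_card_roots (p : ℝ[X]) : Zc p + Multiset.card p.roots = p.natDegree := by
  rw [Zc, ← Multiset.card_map (algebraMap ℝ ℂ), ← roots_map_ofReal_filter_im_eq_zero,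
    ← Multiset.card_add, Multiset.filter_add_not,
    ← (IsAlgClosed.splits (p.map (algebraMap ℝ ℂ))).natDegree_eq_card_roots, natDegree_map]

theorem hasDerivAt_exp_mul_eval (σ : ℝ) (p : ℝ[X]) (x : ℝ) :
    HasDerivAt (fun x => Real.exp (σ * x) * p.eval x)
      (Real.exp (σ * x) * (psig σ p).eval x) x := by
  have hexp : HasDerivAt (fun x => Real.exp (σ * x)) (Real.exp (σ * x) * σ) x := by
    simpa using ((hasDerivAt_id x).const_mul σ).exp
  refine (hexp.mul (p.hasDerivAt x)).congr_deriv ?_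
  simp only [psig, eval_add, eval_mul, eval_C]
  ring

theorem exists_isRoot_psig_mem_Ioo (σ : ℝ) {p : ℝ[X]} {x y : ℝ} (hxy : x < y)
    (hx : p.IsRoot x) (hy : p.IsRoot y) : ∃ z ∈ Set.Ioo x y, (psig σ p).IsRoot z := by
  have hcont : ContinuousOn (fun x => Real.exp (σ * x) * p.eval x) (Set.Icc x y) := by
    fun_prop
  obtain ⟨z, hz, hderiv⟩ := exists_deriv_eq_zero hxy hcont (by simp [hx.eq_zero, hy.eq_zero])
  rw [(hasDerivAt_exp_mul_eval σ p z).deriv] at hderiv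
  exact ⟨z, hz, (mul_eq_zero.mp hderiv).resolve_left (Real.exp_ne_zero _)⟩

theorem card_roots_le_card_roots_psig_add_one (σ : ℝ) {p : ℝ[X]} (h : psig σ p ≠ 0) :
    Multiset.card p.roots ≤ Multiset.card (psig σ p).roots + 1 := by
  refine card_roots_le_card_roots_add_one_of_interleaved
    (rootMultiplicity_sub_one_le_derivative_add_C_mul h) fun x hx y hy hxy => ?_
  obtain ⟨z, hz, hroot⟩ := exists_isRoot_psig_mem_Ioo σ hxy (isRoot_of_mem_roots hx)
    (isRoot_of_mem_roots hy)
  exact ⟨z, (mem_roots h).2 hroot, hz⟩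

theorem natDegree_psig_le (σ : ℝ) (p : ℝ[X]) : (psig σ p).natDegree ≤ p.natDegree :=
  natDegree_add_le_of_degree_le (natDegree_derivative_le p |>.trans (Nat.sub_le _ _))
    (natDegree_C_mul_le σ p)

theorem stmt12 (p : Polynomial ℝ) (σ : ℝ) : Zc (psig σ p) ≤ Zc p := by
  rcases eq_or_ne (psig σ p) 0 with h | h
  · rw [h]
    simp [Zc]
  have hdeg := natDegree_psig_le σ p
  have hroots := card_roots_le_card_roots_psig_add_one σ h
  have hp := Zc_add_card_roots p
  have hpσ := Zc_add_card_roots (psig σ p)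
  obtain ⟨a, ha⟩ := even_Zc p
  obtain ⟨b, hb⟩ := even_Zc (psig σ p)
  omega
end

section
/- Let p be a real polynomial, σ ∈ ℝ, and λ ∈ ℝ such that p(λ) ≠ 0, p_σ(λ) ≠ 0, F[p](λ) = 0, and p'(λ) = 0. If additionally F[p_σ](λ) < 0 (equivalently Q[p_σ](λ) < 0), then p''(λ) = 0, p'''(λ) ≠ 0, and F'[p](λ) = p(λ)·p'''(λ) ≠ 0; in particular λ is a simple root of F[p]. -/
open Polynomial

theorem stmt15 (p : Polynomial ℝ) (σ lam : ℝ)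
    (hp : p.eval lam ≠ 0) (hps : (psig σ p).eval lam ≠ 0)
    (hF : (Fop p).eval lam = 0) (hp' : (derivative p).eval lam = 0)
    (hneg : (Fop (psig σ p)).eval lam < 0) :
    (derivative (derivative p)).eval lam = 0 ∧
      (derivative (derivative (derivative p))).eval lam ≠ 0 ∧
      (derivative (Fop p)).eval lam =
        p.eval lam * (derivative (derivative (derivative p))).eval lam ∧
      (derivative (Fop p)).eval lam ≠ 0 := by
  have h2 : (derivative (derivative p)).eval lam = 0 := by
    simp [Fop, hp'] at hF
    tauto
  have e1 : (Fop (psig σ p)).eval lam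
      = σ * (p.eval lam * (derivative (derivative (derivative p))).eval lam) := by
    simp [Fop, psig, derivative_add, derivative_C_mul, hp', h2]
    ring
  have hprod : σ * (p.eval lam * (derivative (derivative (derivative p))).eval lam) < 0 := by
    rw [← e1]; exact hneg
  have h3 : (derivative (derivative (derivative p))).eval lam ≠ 0 := by
    intro h
    rw [h] at hprod
    simp at hprod
  have e2 : (derivative (Fop p)).eval lam
      = p.eval lam * (derivative (derivative (derivative p))).eval lam := by
    simp [Fop, derivative_mul, derivative_pow, hp', h2]
  exact ⟨h2, h3, e2, e2 ▸ mul_ne_zero hp h3⟩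
end

section
/- Let p be a real polynomial, σ ∈ ℝ, and λ ∈ ℝ with p(λ) ≠ 0, p_σ(λ) ≠ 0, p'(λ) ≠ 0, F[p](λ) = 0, and F[p_σ](λ) < 0. Then F'[p](λ)/(p(λ)·p_σ(λ)) < 0; in particular F'[p](λ) ≠ 0 and λ is a simple root of F[p]. -/
open Polynomial

/-! The identity `p_σ·F[p]' − p·F[p_σ] = (p'' − σ²p)·F[p]` shows that at a root `λ` of `F[p]`
the quotient `F[p]'(λ) / (p(λ)·p_σ(λ))` equals `F[p_σ](λ) / p_σ(λ)²`, which has the sign of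
`F[p_σ](λ)`. -/

theorem psig_mul_derivative_Fop_sub (σ : ℝ) (p : ℝ[X]) :
    psig σ p * derivative (Fop p) - p * Fop (psig σ p) =
      (derivative (derivative p) - C (σ ^ 2) * p) * Fop p := by
  simp only [Fop, psig, derivative_add, derivative_sub, derivative_mul, derivative_sq,
    derivative_C, zero_mul, zero_add, C_pow, C_ofNat]
  ring

theorem eval_derivative_Fop_div_of_eval_Fop_eq_zero {p : ℝ[X]} {σ x : ℝ}
    (hp : p.eval x ≠ 0) (hps : (psig σ p).eval x ≠ 0) (hF : (Fop p).eval x = 0) :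
    (derivative (Fop p)).eval x / (p.eval x * (psig σ p).eval x) =
      (Fop (psig σ p)).eval x / (psig σ p).eval x ^ 2 := by
  have h := congrArg (eval x) (psig_mul_derivative_Fop_sub σ p)
  simp only [eval_sub, eval_mul, hF, mul_zero] at h
  rw [div_eq_div_iff (mul_ne_zero hp hps) (pow_ne_zero 2 hps)]
  linear_combination (psig σ p).eval x * h

theorem stmt16_general (p : Polynomial ℝ) (σ lam : ℝ)
    (hp : p.eval lam ≠ 0) (hps : (psig σ p).eval lam ≠ 0)
    (hF : (Fop p).eval lam = 0)
    (hneg : (Fop (psig σ p)).eval lam < 0) :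
    (derivative (Fop p)).eval lam / (p.eval lam * (psig σ p).eval lam) < 0 ∧
      (derivative (Fop p)).eval lam ≠ 0 := by
  have hlt : (derivative (Fop p)).eval lam / (p.eval lam * (psig σ p).eval lam) < 0 := by
    rw [eval_derivative_Fop_div_of_eval_Fop_eq_zero hp hps hF]
    exact div_neg_of_neg_of_pos hneg (sq_pos_of_ne_zero hps)
  refine ⟨hlt, fun h0 => ?_⟩
  rw [h0, zero_div] at hlt
  exact lt_irrefl 0 hlt

theorem stmt16 (p : Polynomial ℝ) (σ lam : ℝ)
    (hp : p.eval lam ≠ 0) (hps : (psig σ p).eval lam ≠ 0)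
    (hp' : (derivative p).eval lam ≠ 0)
    (hF : (Fop p).eval lam = 0)
    (hneg : (Fop (psig σ p)).eval lam < 0) :
    (derivative (Fop p)).eval lam / (p.eval lam * (psig σ p).eval lam) < 0 ∧
      (derivative (Fop p)).eval lam ≠ 0 :=
  stmt16_general p σ lam hp hps hF hneg
end

section
/- Let R be a real rational function with a finite limit at infinity and q a real polynomial. Then the Cauchy index over the projective real line of q + R equals the Cauchy index of R over ℝ plus the index at infinity of q, where the index at infinity of a polynomial c·z^ν + … (c ≠ 0) is −sign(c) if ν is odd and 0 if ν is even. -/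
open Polynomial Filter Topology
open scoped Classical

/-- The function `ℝ → ℝ` determined by a real rational function, evaluated via its
numerator and denominator in lowest terms. -/
noncomputable def evalFn (R : RatFunc ℝ) : ℝ → ℝ :=
  fun x => R.num.eval x / R.denom.eval x

/-- The Cauchy index of `f` at a point `ω`: `+1` if `f` jumps from `−∞` to `+∞`
across `ω`, `−1` if it jumps from `+∞` to `−∞`, and `0` otherwise (in particular at
poles of even order). -/
noncomputable def indAt (f : ℝ → ℝ) (ω : ℝ) : ℤ :=
  if Tendsto f (𝓝[<] ω) atBot ∧ Tendsto f (𝓝[>] ω) atTop then 1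
  else if Tendsto f (𝓝[<] ω) atTop ∧ Tendsto f (𝓝[>] ω) atBot then -1
  else 0

/-- The Cauchy index of a real rational function over `ℝ`: the sum of the local
indices over all its real poles (the real roots of its denominator). -/
noncomputable def indR (R : RatFunc ℝ) : ℤ :=
  ∑ ω ∈ R.denom.roots.toFinset, indAt (evalFn R) ω

/-- The index at infinity: `+1` if `f(+∞) = −∞` and `f(−∞) = +∞`, `−1` if
`f(+∞) = +∞` and `f(−∞) = −∞`, and `0` otherwise (signs at `±∞` coincide). -/
noncomputable def indInf (f : ℝ → ℝ) : ℤ :=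
  if Tendsto f atTop atBot ∧ Tendsto f atBot atTop then 1
  else if Tendsto f atTop atTop ∧ Tendsto f atBot atBot then -1
  else 0

/-- The generalised Cauchy index over the projective real line. -/
noncomputable def indPR (R : RatFunc ℝ) : ℤ :=
  indR R + indInf (evalFn R)

lemma tendsto_add_atTop_iff {l : Filter ℝ} {f g : ℝ → ℝ} {c : ℝ} (hg : Tendsto g l (𝓝 c)) :
    Tendsto (fun x => f x + g x) l atTop ↔ Tendsto f l atTop := by
  constructor
  · intro h
    have hb : ∀ᶠ x in l, -c - 1 ≤ -g x := hg.neg.eventually (eventually_ge_nhds (by linarith))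
    exact (tendsto_atTop_add_right_of_le' l _ h hb).congr (fun x => by ring)
  · intro h
    exact tendsto_atTop_add_right_of_le' l (c-1) h (hg.eventually (eventually_ge_nhds (by linarith)))

lemma tendsto_add_atBot_iff {l : Filter ℝ} {f g : ℝ → ℝ} {c : ℝ} (hg : Tendsto g l (𝓝 c)) :
    Tendsto (fun x => f x + g x) l atBot ↔ Tendsto f l atBot := by
  constructor
  · intro h
    have hb : ∀ᶠ x in l, -g x ≤ -c + 1 := hg.neg.eventually (eventually_le_nhds (by linarith))
    exact (tendsto_atBot_add_right_of_ge' l _ h hb).congr (fun x => by ring)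
  · intro h
    exact tendsto_atBot_add_right_of_ge' l (c+1) h (hg.eventually (eventually_le_nhds (by linarith)))

lemma ev_ne_nhdsNE (p : Polynomial ℝ) (hp : p ≠ 0) (ω : ℝ) :
    ∀ᶠ x in 𝓝[≠] ω, p.eval x ≠ 0 := by
  have hfin : ({x : ℝ | p.IsRoot x} \ {ω}).Finite :=
    (Polynomial.finite_setOf_isRoot hp).subset Set.diff_subset
  have hop : IsOpen ({x : ℝ | p.IsRoot x} \ {ω})ᶜ := hfin.isClosed.isOpen_compl
  have hmem : ∀ᶠ x in 𝓝 ω, x ∈ ({x : ℝ | p.IsRoot x} \ {ω})ᶜ :=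
    hop.mem_nhds (by simp)
  filter_upwards [hmem.filter_mono nhdsWithin_le_nhds, self_mem_nhdsWithin] with x hx hxω h0
  exact hx ⟨h0, hxω⟩

lemma ev_ne_atTop (p : Polynomial ℝ) (hp : p ≠ 0) : ∀ᶠ x in atTop, p.eval x ≠ 0 :=
  (Polynomial.eventually_no_roots (P := p) hp)

lemma ev_ne_atBot (p : Polynomial ℝ) (hp : p ≠ 0) : ∀ᶠ x in atBot, p.eval x ≠ 0 := by
  obtain ⟨m, hm⟩ := (Polynomial.finite_setOf_isRoot hp).bddBelow
  filter_upwards [eventually_lt_atBot m] with x hx h0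
  exact absurd (hm (show p.IsRoot x from h0)) (not_le.mpr hx)

lemma indAt_congr {f f' g : ℝ → ℝ} {ω : ℝ} (hg : ContinuousAt g ω)
    (h : ∀ᶠ x in 𝓝[≠] ω, f' x = f x + g x) : indAt f' ω = indAt f ω := by
  have hlt : 𝓝[<] ω ≤ 𝓝[≠] ω :=
    nhdsWithin_mono ω (fun x hx => Set.mem_compl_singleton_iff.mpr (ne_of_lt hx))
  have hgt : 𝓝[>] ω ≤ 𝓝[≠] ω :=
    nhdsWithin_mono ω (fun x hx => Set.mem_compl_singleton_iff.mpr (ne_of_gt hx))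
  have hg1 : Tendsto g (𝓝[<] ω) (𝓝 (g ω)) := hg.tendsto.mono_left nhdsWithin_le_nhds
  have hg2 : Tendsto g (𝓝[>] ω) (𝓝 (g ω)) := hg.tendsto.mono_left nhdsWithin_le_nhds
  have e1 : Tendsto f' (𝓝[<] ω) atBot ↔ Tendsto f (𝓝[<] ω) atBot := by
    rw [tendsto_congr' (h.filter_mono hlt), tendsto_add_atBot_iff hg1]
  have e2 : Tendsto f' (𝓝[>] ω) atTop ↔ Tendsto f (𝓝[>] ω) atTop := by
    rw [tendsto_congr' (h.filter_mono hgt), tendsto_add_atTop_iff hg2]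
  have e3 : Tendsto f' (𝓝[<] ω) atTop ↔ Tendsto f (𝓝[<] ω) atTop := by
    rw [tendsto_congr' (h.filter_mono hlt), tendsto_add_atTop_iff hg1]
  have e4 : Tendsto f' (𝓝[>] ω) atBot ↔ Tendsto f (𝓝[>] ω) atBot := by
    rw [tendsto_congr' (h.filter_mono hgt), tendsto_add_atBot_iff hg2]
  unfold indAt
  simp only [e1, e2, e3, e4]

lemma indInf_congr {f f' g : ℝ → ℝ} {L L' : ℝ}
    (hT : Tendsto f atTop (𝓝 L)) (hB : Tendsto f atBot (𝓝 L'))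
    (h1 : ∀ᶠ x in atTop, f' x = g x + f x) (h2 : ∀ᶠ x in atBot, f' x = g x + f x) :
    indInf f' = indInf g := by
  have e1 : Tendsto f' atTop atBot ↔ Tendsto g atTop atBot := by
    rw [tendsto_congr' h1, tendsto_add_atBot_iff hT]
  have e2 : Tendsto f' atBot atTop ↔ Tendsto g atBot atTop := by
    rw [tendsto_congr' h2, tendsto_add_atTop_iff hB]
  have e3 : Tendsto f' atTop atTop ↔ Tendsto g atTop atTop := by
    rw [tendsto_congr' h1, tendsto_add_atTop_iff hT]
  have e4 : Tendsto f' atBot atBot ↔ Tendsto g atBot atBot := by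
    rw [tendsto_congr' h2, tendsto_add_atBot_iff hB]
  unfold indInf
  simp only [e1, e2, e3, e4]

lemma denom_add_algebraMap (q : Polynomial ℝ) (R : RatFunc ℝ) :
    (algebraMap (Polynomial ℝ) (RatFunc ℝ) q + R).denom = R.denom ∧
    (algebraMap (Polynomial ℝ) (RatFunc ℝ) q + R).num = q * R.denom + R.num := by
  have hq0 : R.denom ≠ 0 := R.denom_ne_zero
  have hdz : algebraMap (Polynomial ℝ) (RatFunc ℝ) R.denom ≠ 0 :=
    RatFunc.algebraMap_ne_zero hq0
  have hS : algebraMap (Polynomial ℝ) (RatFunc ℝ) q + R =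
      algebraMap (Polynomial ℝ) (RatFunc ℝ) (q * R.denom + R.num) /
        algebraMap (Polynomial ℝ) (RatFunc ℝ) R.denom := by
    conv_lhs => rw [← RatFunc.num_div_denom R]
    rw [map_add, map_mul, add_div, mul_div_cancel_right₀ _ hdz]
  have hcop : IsCoprime (q * R.denom + R.num) R.denom := by
    have h := (RatFunc.isCoprime_num_denom R).add_mul_left_left q
    rwa [mul_comm, add_comm] at h
  have hgcd : gcd (q * R.denom + R.num) R.denom = 1 := by
    have hu : IsUnit (gcd (q * R.denom + R.num) R.denom) :=
      hcop.isUnit_of_dvd' (gcd_dvd_left _ _) (gcd_dvd_right _ _)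
    rw [← normalize_gcd]
    exact normalize_eq_one.mpr hu
  constructor
  · rw [hS, RatFunc.denom_div _ hq0, hgcd]
    simp [(R.monic_denom).leadingCoeff, EuclideanDomain.div_one]
  · rw [hS, RatFunc.num_div, hgcd]
    simp [(R.monic_denom).leadingCoeff, EuclideanDomain.div_one]

lemma tendsto_evalFn_atBot (R : RatFunc ℝ) (hR : ∃ L : ℝ, Tendsto (evalFn R) atTop (𝓝 L)) :
    ∃ L' : ℝ, Tendsto (evalFn R) atBot (𝓝 L') := by
  obtain ⟨L, hL⟩ := hR
  have hq0 : R.denom ≠ 0 := R.denom_ne_zero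
  have hdeg : R.num.degree ≤ R.denom.degree := by
    by_contra hlt
    push_neg at hlt
    have habs : Tendsto (fun x => |Polynomial.eval x R.num / Polynomial.eval x R.denom|)
        atTop atTop := Polynomial.abs_div_tendsto_atTop_of_degree_gt R.num R.denom hlt hq0
    exact not_tendsto_atTop_of_tendsto_nhds hL.abs habs
  by_cases hn0 : R.num = 0
  · refine ⟨0, ?_⟩
    have : evalFn R = fun _ => 0 := by funext x; simp [evalFn, hn0]
    rw [this]
    exact tendsto_const_nhds
  · set N := R.num.comp (-X : Polynomial ℝ) with hN
    set D := R.denom.comp (-X : Polynomial ℝ) with hD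
    have hXnd : (-X : Polynomial ℝ).natDegree = 1 := by simp
    have hXnd0 : (-X : Polynomial ℝ).natDegree ≠ 0 := by simp
    have hD0 : D ≠ 0 := by
      have : D.leadingCoeff ≠ 0 := by
        rw [hD, Polynomial.leadingCoeff_comp hXnd0]
        simp [Polynomial.leadingCoeff_neg, (R.monic_denom).leadingCoeff]
      exact fun h => this (by simp [h])
    have hN0 : N ≠ 0 := by
      have : N.leadingCoeff ≠ 0 := by
        rw [hN, Polynomial.leadingCoeff_comp hXnd0]
        simp [Polynomial.leadingCoeff_neg, Polynomial.leadingCoeff_ne_zero.mpr hn0]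
      exact fun h => this (by simp [h])
    have hdegN : N.degree = R.num.degree := by
      rw [Polynomial.degree_eq_natDegree hN0, Polynomial.degree_eq_natDegree hn0, hN,
        Polynomial.natDegree_comp, hXnd, mul_one]
    have hdegD : D.degree = R.denom.degree := by
      rw [Polynomial.degree_eq_natDegree hD0, Polynomial.degree_eq_natDegree hq0, hD,
        Polynomial.natDegree_comp, hXnd, mul_one]
    have hle : N.degree ≤ D.degree := by rw [hdegN, hdegD]; exact hdeg
    rcases lt_or_eq_of_le hle with hlt | heq
    · refine ⟨0, Tendsto.congr (fun x => ?_)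
        ((Polynomial.div_tendsto_zero_of_degree_lt N D hlt).comp tendsto_neg_atBot_atTop)⟩
      simp [Function.comp, hN, hD, Polynomial.eval_comp, evalFn]
    · refine ⟨N.leadingCoeff / D.leadingCoeff, Tendsto.congr (fun x => ?_)
        ((Polynomial.div_tendsto_leadingCoeff_div_of_degree_eq N D heq).comp
          tendsto_neg_atBot_atTop)⟩
      simp [Function.comp, hN, hD, Polynomial.eval_comp, evalFn]

theorem stmt18 (R : RatFunc ℝ) (hR : ∃ L : ℝ, Tendsto (evalFn R) atTop (𝓝 L))
    (q : Polynomial ℝ) :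
    indPR (algebraMap (Polynomial ℝ) (RatFunc ℝ) q + R) =
      indR R + indInf (fun x => q.eval x) := by
  obtain ⟨L, hT⟩ := hR
  obtain ⟨L', hB⟩ := tendsto_evalFn_atBot R ⟨L, hT⟩
  obtain ⟨hd, hn⟩ := denom_add_algebraMap q R
  set S := algebraMap (Polynomial ℝ) (RatFunc ℝ) q + R with hSdef
  have hq0 : R.denom ≠ 0 := R.denom_ne_zero
  have hfe : ∀ x : ℝ, R.denom.eval x ≠ 0 → evalFn S x = q.eval x + evalFn R x := by
    intro x hx
    show S.num.eval x / S.denom.eval x = _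
    rw [hn, hd]
    simp only [Polynomial.eval_add, Polynomial.eval_mul]
    rw [add_div, mul_div_cancel_right₀ _ hx]
    rfl
  have hind : indR S = indR R := by
    unfold indR
    rw [hd]
    refine Finset.sum_congr rfl fun ω _ => ?_
    refine indAt_congr q.continuous.continuousAt ?_
    filter_upwards [ev_ne_nhdsNE R.denom hq0 ω] with x hx
    rw [hfe x hx]; ring
  have hinf : indInf (evalFn S) = indInf (fun x => q.eval x) := by
    refine indInf_congr hT hB ?_ ?_
    · filter_upwards [ev_ne_atTop R.denom hq0] with x hx; exact hfe x hx
    · filter_upwards [ev_ne_atBot R.denom hq0] with x hx; exact hfe x hx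
  unfold indPR
  rw [hind, hinf]
end
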